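/- There exists an infinitely differentiable function χ : ℝ² → ℝ with the following properties: (1) 0 ≤ χ(w,z) ≤ 1 for all (w,z); (2) χ is doubly periodic: χ(w+1, z) = χ(w,z) and χ(w, z+1) = χ(w,z) for all (w,z); (3) χ(w,z) = 1 whenever the fractional part of w lies in [0, 1/4] ∪ [3/4, 1); (4) χ(w,z) = 0 whenever the fractional part of w lies in [7/16, 9/16]; and (5) for every s ∈ (−1, 1), ∂χ/∂w (γ(s)) + (π(1+s²))^{−1} · ∂χ/∂z (γ(s)) = 0, where γ(s) = (arccot(s)/π, s) with arccot : ℝ → (0,π). -/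

import Mathlib

/-- Inverse cotangent `arccot : ℝ → (0, π)`. -/
noncomputable def arccot (s : ℝ) : ℝ := Real.pi / 2 - Real.arctan s

open Real

noncomputable def sTr : ℝ → ℝ := Real.smoothTransition

noncomputable def gg (x : ℝ) : ℝ :=
  sTr (2000 * Real.cos (2 * Real.pi * x) - 1999) * Real.sin (2 * Real.pi * x) / (2 * Real.pi)

noncomputable def kk (w : ℝ) : ℝ := Real.sin (Real.pi * w) ^ 2 / Real.pi

noncomputable def qq (w : ℝ) : ℝ :=
  sTr (1 - Real.sqrt 2 * Real.cos (2 * Real.pi * w)) * (kk w / (1 + kk w ^ 2))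

noncomputable def ct (w : ℝ) : ℝ := Real.cos (Real.pi * w) / Real.sin (Real.pi * w)

noncomputable def tau (p : ℝ × ℝ) : ℝ := p.1 - qq p.1 * gg (p.2 - ct p.1)

noncomputable def chi (p : ℝ × ℝ) : ℝ :=
  sTr ((Real.cos (2 * Real.pi * tau p) + 4 / 5) * (5 / 2))

lemma abs_gg_le (x : ℝ) : |gg x| ≤ 1 / 180 := by
  rcases le_or_gt (Real.cos (2 * Real.pi * x)) (1999 / 2000) with h | h
  · have h0 : sTr (2000 * Real.cos (2 * Real.pi * x) - 1999) = 0 :=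
      Real.smoothTransition.zero_of_nonpos (by linarith)
    simp [gg, h0]
  · have hsin : Real.sin (2 * Real.pi * x) ^ 2 ≤ (1/30)^2 := by
      have := Real.sin_sq_add_cos_sq (2 * Real.pi * x)
      have hc1 : Real.cos (2 * Real.pi * x) ≤ 1 := Real.cos_le_one _
      nlinarith
    have habs : |Real.sin (2 * Real.pi * x)| ≤ 1/30 := by
      rw [← Real.sqrt_sq_eq_abs]
      calc Real.sqrt (Real.sin (2*Real.pi*x)^2) ≤ Real.sqrt ((1/30)^2) := Real.sqrt_le_sqrt hsin
      _ = 1/30 := by rw [Real.sqrt_sq]; norm_num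
    have hST : |sTr (2000 * Real.cos (2 * Real.pi * x) - 1999)| ≤ 1 := by
      simp only [sTr]
      rw [abs_of_nonneg (Real.smoothTransition.nonneg _)]
      exact Real.smoothTransition.le_one _
    have hpi : (6:ℝ) ≤ 2 * Real.pi := by nlinarith [Real.pi_gt_three]
    rw [gg, abs_div, abs_mul, abs_of_pos (by positivity : (0:ℝ) < 2 * Real.pi)]
    rw [div_le_iff₀ (by positivity)]
    nlinarith [abs_nonneg (Real.sin (2*Real.pi*x))]

lemma qq_nonneg (w : ℝ) : 0 ≤ qq w := by
  have h1 : (0:ℝ) ≤ kk w := by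
    have := Real.pi_pos
    simp only [kk]; positivity
  have h2 : (0:ℝ) < 1 + kk w ^ 2 := by positivity
  exact mul_nonneg (Real.smoothTransition.nonneg _) (by positivity)

lemma qq_le_half (w : ℝ) : qq w ≤ 1 / 2 := by
  have h1 : (0:ℝ) ≤ kk w := by
    have := Real.pi_pos
    simp only [kk]; positivity
  have h2 : (0:ℝ) < 1 + kk w ^ 2 := by positivity
  have h3 : kk w / (1 + kk w ^ 2) ≤ 1/2 := by
    rw [div_le_iff₀ h2]; nlinarith [sq_nonneg (1 - kk w)]
  calc qq w ≤ 1 * (kk w / (1 + kk w ^ 2)) :=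
        mul_le_mul_of_nonneg_right (Real.smoothTransition.le_one _) (by positivity)
  _ ≤ 1/2 := by simpa using h3

lemma abs_b_le (w x : ℝ) : |qq w * gg x| ≤ 1 / 360 := by
  rw [abs_mul]
  calc |qq w| * |gg x| ≤ (1/2) * (1/180) := by
        apply mul_le_mul _ (abs_gg_le x) (abs_nonneg _) (by norm_num)
        rw [abs_of_nonneg (qq_nonneg w)]; exact qq_le_half w
  _ = 1/360 := by norm_num

lemma qq_periodic (w : ℝ) : qq (w + 1) = qq w := by
  have h1 : Real.cos (2 * Real.pi * (w+1)) = Real.cos (2 * Real.pi * w) := by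
    rw [show 2*Real.pi*(w+1) = 2*Real.pi*w + 2*Real.pi by ring, Real.cos_add_two_pi]
  have h2 : kk (w+1) = kk w := by
    simp only [kk]
    rw [show Real.pi*(w+1) = Real.pi*w + Real.pi by ring, Real.sin_add_pi]
    ring
  simp only [qq, h1, h2]

lemma ct_periodic (w : ℝ) : ct (w + 1) = ct w := by
  simp only [ct]
  rw [show Real.pi*(w+1) = Real.pi*w + Real.pi by ring, Real.sin_add_pi, Real.cos_add_pi,
    neg_div_neg_eq]

lemma gg_periodic (x : ℝ) : gg (x + 1) = gg x := by
  simp only [gg]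
  rw [show 2*Real.pi*(x+1) = 2*Real.pi*x + 2*Real.pi by ring, Real.cos_add_two_pi,
    Real.sin_add_two_pi]

lemma chi_wper (w z : ℝ) : chi (w + 1, z) = chi (w, z) := by
  have ht : tau (w+1, z) = tau (w, z) + 1 := by
    simp only [tau]
    rw [qq_periodic, ct_periodic]
    ring
  simp only [chi, ht]
  rw [show 2*Real.pi*(tau (w,z)+1) = 2*Real.pi*tau (w,z) + 2*Real.pi by ring,
    Real.cos_add_two_pi]

lemma chi_zper (w z : ℝ) : chi (w, z + 1) = chi (w, z) := by
  have ht : tau (w, z+1) = tau (w, z) := by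
    simp only [tau]
    rw [show z + 1 - ct w = (z - ct w) + 1 by ring, gg_periodic]
  simp only [chi, ht]

lemma cos_two_pi_fract (w : ℝ) : Real.cos (2*Real.pi*w) = Real.cos (2*Real.pi*Int.fract w) := by
  conv_lhs => rw [← Int.fract_add_floor w]
  rw [show 2*Real.pi*(Int.fract w + (⌊w⌋:ℝ)) = 2*Real.pi*Int.fract w + (⌊w⌋:ℝ)*(2*Real.pi)
    by ring, Real.cos_add_int_mul_two_pi]

lemma cos_tau_facts (w z : ℝ) :
    |Real.sin (2*Real.pi*(qq w * gg (z - ct w)))| ≤ 7/360 ∧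
    (999:ℝ)/1000 ≤ Real.cos (2*Real.pi*(qq w * gg (z - ct w))) ∧
    Real.cos (2*Real.pi*(qq w * gg (z - ct w))) ≤ 1 := by
  set b := qq w * gg (z - ct w) with hbdef
  have hb : |b| ≤ 1/360 := abs_b_le _ _
  have hpi : (3.14:ℝ) < Real.pi := by
    have := Real.pi_gt_d6; linarith
  have hpi2 : Real.pi < 3.15 := Real.pi_lt_d2
  have h2b : |2*Real.pi*b| ≤ 7/360 := by
    rw [abs_mul, abs_of_pos (by positivity : (0:ℝ) < 2*Real.pi)]
    nlinarith [abs_nonneg b]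
  refine ⟨le_trans (Real.abs_sin_le_abs) h2b, ?_, Real.cos_le_one _⟩
  have := Real.one_sub_sq_div_two_le_cos (x := 2*Real.pi*b)
  have hsq : (2*Real.pi*b)^2 ≤ (7/360)^2 := by
    have h' := pow_le_pow_left₀ (abs_nonneg (2*Real.pi*b)) h2b 2
    rwa [sq_abs] at h'
  nlinarith

lemma chi_eq_one (w z : ℝ) (h : 0 ≤ Real.cos (2*Real.pi*w)) : chi (w, z) = 1 := by
  obtain ⟨hs, hc, _⟩ := cos_tau_facts w z
  set b := qq w * gg (z - ct w) with hbdef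
  have htau : tau (w, z) = w - b := rfl
  have hcos : Real.cos (2*Real.pi*tau (w,z)) =
      Real.cos (2*Real.pi*w) * Real.cos (2*Real.pi*b)
      + Real.sin (2*Real.pi*w) * Real.sin (2*Real.pi*b) := by
    rw [htau, show 2*Real.pi*(w-b) = 2*Real.pi*w - 2*Real.pi*b by ring, Real.cos_sub]
  have hge : -(2:ℝ)/5 ≤ Real.cos (2*Real.pi*tau (w,z)) := by
    rw [hcos]
    have h1 : 0 ≤ Real.cos (2*Real.pi*w) * Real.cos (2*Real.pi*b) := by nlinarith
    have h2 : |Real.sin (2*Real.pi*w) * Real.sin (2*Real.pi*b)| ≤ 7/360 := by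
      rw [abs_mul]
      calc |Real.sin (2*Real.pi*w)| * |Real.sin (2*Real.pi*b)| ≤ 1 * (7/360) := by
            apply mul_le_mul (abs_le.2 ⟨Real.neg_one_le_sin _, Real.sin_le_one _⟩) hs (abs_nonneg _) zero_le_one
      _ = 7/360 := by norm_num
    have := abs_le.1 h2
    linarith [this.1]
  simp only [chi]
  apply Real.smoothTransition.one_of_one_le
  nlinarith

lemma chi_eq_zero (w z : ℝ) (h : Real.cos (2*Real.pi*w) ≤ -(92/100)) : chi (w, z) = 0 := by
  obtain ⟨hs, hc, hc1⟩ := cos_tau_facts w z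
  set b := qq w * gg (z - ct w) with hbdef
  have htau : tau (w, z) = w - b := rfl
  have hcos : Real.cos (2*Real.pi*tau (w,z)) =
      Real.cos (2*Real.pi*w) * Real.cos (2*Real.pi*b)
      + Real.sin (2*Real.pi*w) * Real.sin (2*Real.pi*b) := by
    rw [htau, show 2*Real.pi*(w-b) = 2*Real.pi*w - 2*Real.pi*b by ring, Real.cos_sub]
  have hle : Real.cos (2*Real.pi*tau (w,z)) ≤ -(4:ℝ)/5 := by
    rw [hcos]
    have h1 : Real.cos (2*Real.pi*w) * Real.cos (2*Real.pi*b) ≤ (-(92/100)) * (999/1000) := by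
      nlinarith
    have h2 : Real.sin (2*Real.pi*w) * Real.sin (2*Real.pi*b) ≤ 7/360 := by
      calc Real.sin (2*Real.pi*w) * Real.sin (2*Real.pi*b)
          ≤ |Real.sin (2*Real.pi*w) * Real.sin (2*Real.pi*b)| := le_abs_self _
      _ ≤ 1 * (7/360) := by
            rw [abs_mul]
            apply mul_le_mul (abs_le.2 ⟨Real.neg_one_le_sin _, Real.sin_le_one _⟩) hs (abs_nonneg _) zero_le_one
      _ = 7/360 := by norm_num
    nlinarith
  simp only [chi]
  apply Real.smoothTransition.zero_of_nonpos
  nlinarith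

lemma bandA (w : ℝ) (h : Int.fract w ∈ Set.Icc (0:ℝ) (1/4) ∪ Set.Ico (3/4:ℝ) 1) :
    0 ≤ Real.cos (2*Real.pi*w) := by
  rw [cos_two_pi_fract]
  have hpi := Real.pi_pos
  rcases h with ⟨h0, h1⟩ | ⟨h0, h1⟩
  · apply Real.cos_nonneg_of_mem_Icc
    constructor <;> [nlinarith; nlinarith]
  · rw [← Real.cos_sub_two_pi]
    apply Real.cos_nonneg_of_mem_Icc
    constructor <;> [nlinarith; nlinarith]

lemma bandB (w : ℝ) (h : Int.fract w ∈ Set.Icc (7/16:ℝ) (9/16)) :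
    Real.cos (2*Real.pi*w) ≤ -(92/100) := by
  rw [cos_two_pi_fract]
  obtain ⟨h0, h1⟩ := h
  set f := Int.fract w
  have hpi : (3.14:ℝ) < Real.pi := by have := Real.pi_gt_d6; linarith
  have hpi2 : Real.pi < 3.15 := Real.pi_lt_d2
  have hθ : Real.cos (2*Real.pi*f - Real.pi) = - Real.cos (2*Real.pi*f) := Real.cos_sub_pi _
  have hlow : 1 - (2*Real.pi*f - Real.pi)^2/2 ≤ Real.cos (2*Real.pi*f - Real.pi) :=
    Real.one_sub_sq_div_two_le_cos
  have hsq : (2*Real.pi*f - Real.pi)^2 ≤ (Real.pi/8)^2 := by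
    have e : 2*Real.pi*f - Real.pi = Real.pi*(2*f-1) := by ring
    rw [e, mul_pow]
    have : (2*f-1)^2 ≤ (1/8)^2 := by nlinarith
    nlinarith [sq_nonneg (2*f-1), sq_nonneg Real.pi]
  nlinarith

lemma contDiff_lin (a : ℝ) : ContDiff ℝ (⊤:ℕ∞) (fun x : ℝ => a * x) :=
  contDiff_const.mul contDiff_id

lemma contDiff_gg : ContDiff ℝ (⊤:ℕ∞) gg := by
  unfold gg sTr
  apply ContDiff.div_const
  apply ContDiff.mul
  · exact Real.smoothTransition.contDiff.comp
      ((contDiff_const.mul (Real.contDiff_cos.comp (contDiff_lin (2*Real.pi)))).sub contDiff_const)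
  · exact Real.contDiff_sin.comp (contDiff_lin (2*Real.pi))

lemma contDiff_kk : ContDiff ℝ (⊤:ℕ∞) kk := by
  unfold kk
  exact ((Real.contDiff_sin.comp (contDiff_lin Real.pi)).pow 2).div_const _

lemma contDiff_qq : ContDiff ℝ (⊤:ℕ∞) qq := by
  unfold qq sTr
  apply ContDiff.mul
  · exact Real.smoothTransition.contDiff.comp
      (contDiff_const.sub (contDiff_const.mul (Real.contDiff_cos.comp (contDiff_lin (2*Real.pi)))))
  · exact contDiff_kk.div (contDiff_const.add (contDiff_kk.pow 2))
      (fun w => by positivity)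

lemma sqrt_two_gt : (1.4:ℝ) < Real.sqrt 2 := by
  nlinarith [Real.sq_sqrt (show (0:ℝ) ≤ 2 by norm_num), Real.sqrt_nonneg 2]

lemma qq_eq_zero {w : ℝ} (h : 3/4 < Real.cos (2*Real.pi*w)) : qq w = 0 := by
  have h2 : 1 - Real.sqrt 2 * Real.cos (2*Real.pi*w) ≤ 0 := by
    have hc1 : Real.cos (2*Real.pi*w) ≤ 1 := Real.cos_le_one _
    nlinarith [sqrt_two_gt]
  simp only [qq, sTr, Real.smoothTransition.zero_of_nonpos h2, zero_mul]

lemma contDiff_tau : ContDiff ℝ (⊤:ℕ∞) tau := by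
  have hF : ContDiff ℝ (⊤:ℕ∞) (fun p : ℝ × ℝ => qq p.1 * gg (p.2 - ct p.1)) := by
    rw [contDiff_iff_contDiffAt]
    intro p
    rcases eq_or_ne (Real.sin (Real.pi * p.1)) 0 with hs | hs
    · obtain ⟨n, hn⟩ := Real.sin_eq_zero_iff.1 hs
      have hp1 : p.1 = n := by
        have hpi := Real.pi_ne_zero
        have h2 : Real.pi * p.1 = Real.pi * (n:ℝ) := by linarith [hn]
        exact mul_left_cancel₀ hpi h2
      have hcos1 : Real.cos (2*Real.pi*p.1) = 1 := by
        rw [hp1, show 2*Real.pi*(n:ℝ) = (n:ℝ)*(2*Real.pi) by ring]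
        exact Real.cos_int_mul_two_pi n
      have hU : IsOpen {x : ℝ × ℝ | 3/4 < Real.cos (2*Real.pi*x.1)} :=
        isOpen_lt continuous_const (by continuity)
      have hp : p ∈ {x : ℝ × ℝ | 3/4 < Real.cos (2*Real.pi*x.1)} := by
        simp only [Set.mem_setOf_eq, hcos1]; norm_num
      have hev : (fun p : ℝ × ℝ => qq p.1 * gg (p.2 - ct p.1)) =ᶠ[nhds p]
          (fun _ => (0:ℝ)) := by
        apply Filter.eventuallyEq_of_mem (hU.mem_nhds hp)
        intro x hx
        simp only [Set.mem_setOf_eq] at hx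
        simp [qq_eq_zero hx]
      exact (contDiffAt_const (c := (0:ℝ))).congr_of_eventuallyEq hev
    · have hct : ContDiffAt ℝ (⊤:ℕ∞) ct p.1 := by
        apply ContDiffAt.div
        · exact (Real.contDiff_cos.comp (contDiff_lin Real.pi)).contDiffAt
        · exact (Real.contDiff_sin.comp (contDiff_lin Real.pi)).contDiffAt
        · exact hs
      apply ContDiffAt.mul
      · exact (contDiff_qq.contDiffAt).comp p contDiffAt_fst
      · exact (contDiff_gg.contDiffAt).comp p
          (contDiffAt_snd.sub (hct.comp p contDiffAt_fst))
  exact contDiff_fst.sub hF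

lemma contDiff_chi : ContDiff ℝ (⊤:ℕ∞) chi := by
  unfold chi sTr
  apply Real.smoothTransition.contDiff.comp
  apply ContDiff.mul _ contDiff_const
  apply ContDiff.add _ contDiff_const
  exact Real.contDiff_cos.comp (contDiff_const.mul contDiff_tau)

lemma chi_mem_Icc (p : ℝ × ℝ) : chi p ∈ Set.Icc (0:ℝ) 1 :=
  ⟨Real.smoothTransition.nonneg _, Real.smoothTransition.le_one _⟩

lemma hasDerivAt_gg_zero : HasDerivAt gg 1 0 := by
  have hlin0 : HasDerivAt (fun x : ℝ => 2*Real.pi*x) (2*Real.pi) 0 := by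
    simpa using (hasDerivAt_id (0:ℝ)).const_mul (2*Real.pi)
  have he : HasDerivAt (fun x : ℝ => 2000 * Real.cos (2*Real.pi*x) - 1999)
      (2000 * (-Real.sin (2*Real.pi*0) * (2*Real.pi))) 0 := (hlin0.cos.const_mul 2000).sub_const _
  have hSTd : HasDerivAt Real.smoothTransition
      (deriv Real.smoothTransition (2000 * Real.cos (2*Real.pi*0) - 1999))
      (2000 * Real.cos (2*Real.pi*0) - 1999) :=
    (((Real.smoothTransition.contDiff (n := (1:ℕ∞))).differentiable (by simp)) _).hasDerivAt
  have hu := hSTd.comp 0 he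
  simp only [Function.comp_def] at hu
  have h := hu.mul hlin0.sin
  have h2 := h.div_const (2*Real.pi)
  have hfun : gg = fun x => Real.smoothTransition (2000 * Real.cos (2*Real.pi*x) - 1999) *
      Real.sin (2*Real.pi*x) / (2*Real.pi) := rfl
  rw [hfun]
  refine h2.congr_deriv (Eq.symm ?_)
  have : (2:ℝ)*Real.pi*0 = 0 := by ring
  rw [this]
  norm_num [Real.smoothTransition.one]

lemma gg_zero : gg 0 = 0 := by
  simp [gg]

lemma grad_chi (s : ℝ) (hs : s ∈ Set.Ioo (-1:ℝ) 1) :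
    fderiv ℝ chi ((Real.pi/2 - Real.arctan s)/Real.pi, s) (1, 0) +
      (Real.pi * (1 + s^2))⁻¹ * fderiv ℝ chi ((Real.pi/2 - Real.arctan s)/Real.pi, s) (0, 1)
      = 0 := by
  have hπ : (0:ℝ) < Real.pi := Real.pi_pos
  set a := Real.arctan s with ha
  set w₀ := (Real.pi/2 - a)/Real.pi with hw₀
  set p₀ : ℝ × ℝ := (w₀, s) with hp₀
  have hw : Real.pi * w₀ = Real.pi/2 - a := by
    rw [hw₀]; field_simp
  have hsin : Real.sin (Real.pi*w₀) = Real.cos a := by rw [hw, Real.sin_pi_div_two_sub]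
  have hcos : Real.cos (Real.pi*w₀) = Real.sin a := by rw [hw, Real.cos_pi_div_two_sub]
  have hca : 0 < Real.cos a := Real.cos_arctan_pos s
  have hsne : Real.sin (Real.pi*w₀) ≠ 0 := by rw [hsin]; exact hca.ne'
  have hct : ct w₀ = s := by
    rw [ct, hsin, hcos, ← Real.tan_eq_sin_div_cos, ha, Real.tan_arctan]
  set S := Real.sin (Real.pi*w₀)^2 with hSdef
  have hSpos : 0 < S := by positivity
  have hS : S = 1/(1+s^2) := by
    rw [hSdef, hsin, ha, Real.cos_arctan]
    rw [div_pow, one_pow, Real.sq_sqrt (by positivity)]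
  have h1s : (0:ℝ) < 1 + s^2 := by positivity
  -- a ∈ (-π/4, π/4)
  have ha1 : a < Real.pi/4 := by
    rw [ha, ← Real.arctan_one]; exact Real.arctan_strictMono hs.2
  have ha2 : -(Real.pi/4) < a := by
    rw [ha]
    have := Real.arctan_strictMono hs.1
    rwa [Real.arctan_neg, Real.arctan_one] at this
  have hcos2w : Real.cos (2*Real.pi*w₀) ≤ 0 := by
    apply Real.cos_nonpos_of_pi_div_two_le_of_le
    · rw [show 2*Real.pi*w₀ = 2*(Real.pi*w₀) by ring, hw]; linarith
    · rw [show 2*Real.pi*w₀ = 2*(Real.pi*w₀) by ring, hw]; linarith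
  have hqval : qq w₀ = kk w₀ / (1 + kk w₀^2) := by
    have h1 : sTr (1 - Real.sqrt 2 * Real.cos (2*Real.pi*w₀)) = 1 := by
      apply Real.smoothTransition.one_of_one_le
      nlinarith [Real.sqrt_nonneg 2]
    rw [qq, h1, one_mul]
  have hkk : kk w₀ = S / Real.pi := rfl
  -- derivative of ct
  have hlinw : HasDerivAt (fun w : ℝ => Real.pi*w) (Real.pi) w₀ := by
    simpa using (hasDerivAt_id w₀).const_mul Real.pi
  have hC : HasDerivAt ct (-Real.pi / S) w₀ := by
    have h1 := hlinw.cos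
    have h2 := hlinw.sin
    have h3 := h1.div h2 hsne
    have hfun : ct = fun w => Real.cos (Real.pi*w) / Real.sin (Real.pi*w) := rfl
    rw [hfun]
    have hid := Real.sin_sq_add_cos_sq (Real.pi*w₀)
    have hnum : -Real.sin (Real.pi*w₀)*Real.pi*Real.sin (Real.pi*w₀)
        - Real.cos (Real.pi*w₀)*(Real.cos (Real.pi*w₀)*Real.pi) = -Real.pi := by
      linear_combination (-Real.pi) * hid
    exact h3.congr_deriv (by rw [hnum, hSdef])
  set Cd := -Real.pi / S with hCd
  -- fderiv machinery
  set L1 : ℝ × ℝ →L[ℝ] ℝ := ContinuousLinearMap.fst ℝ ℝ ℝ with hL1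
  set L2 : ℝ × ℝ →L[ℝ] ℝ := ContinuousLinearMap.snd ℝ ℝ ℝ with hL2
  have hfst : HasFDerivAt (fun p : ℝ × ℝ => p.1) L1 p₀ := hasFDerivAt_fst
  have hsnd : HasFDerivAt (fun p : ℝ × ℝ => p.2) L2 p₀ := hasFDerivAt_snd
  have hctf : HasFDerivAt (fun p : ℝ × ℝ => ct p.1) (Cd • L1) p₀ :=
    by have := hC.comp_hasFDerivAt p₀ hfst; exact this
  have hv : HasFDerivAt (fun p : ℝ × ℝ => p.2 - ct p.1) (L2 - Cd • L1) p₀ :=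
    hsnd.sub hctf
  have hvz : (fun p : ℝ × ℝ => p.2 - ct p.1) p₀ = 0 := by
    simp [hp₀, hct]
  have hgv : HasFDerivAt (fun p : ℝ × ℝ => gg (p.2 - ct p.1)) ((1:ℝ) • (L2 - Cd • L1)) p₀ :=
    hasDerivAt_gg_zero.comp_hasFDerivAt_of_eq p₀ hv hvz.symm
  have hqd : HasDerivAt qq (deriv qq w₀) w₀ := by
    have hcd : ContDiff ℝ (⊤:ℕ∞) qq := by
      unfold qq sTr
      apply ContDiff.mul
      · exact Real.smoothTransition.contDiff.comp
          (contDiff_const.sub (contDiff_const.mul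
            (Real.contDiff_cos.comp (contDiff_const.mul contDiff_id))))
      · have hkk' : ContDiff ℝ (⊤:ℕ∞) kk := by
          unfold kk
          exact ((Real.contDiff_sin.comp (contDiff_const.mul contDiff_id)).pow 2).div_const _
        exact hkk'.div (contDiff_const.add (hkk'.pow 2)) (fun w => by positivity)
    exact ((hcd.differentiable (by simp)) w₀).hasDerivAt
  have hqf : HasFDerivAt (fun p : ℝ × ℝ => qq p.1) ((deriv qq w₀) • L1) p₀ :=
    by have := hqd.comp_hasFDerivAt p₀ hfst; exact this
  have hprod : HasFDerivAt (fun p : ℝ × ℝ => qq p.1 * gg (p.2 - ct p.1))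
      ((qq p₀.1) • ((1:ℝ) • (L2 - Cd • L1)) + (gg (p₀.2 - ct p₀.1)) • ((deriv qq w₀) • L1)) p₀ :=
    hqf.mul hgv
  have htau : HasFDerivAt tau
      (L1 - ((qq p₀.1) • ((1:ℝ) • (L2 - Cd • L1)) + (gg (p₀.2 - ct p₀.1)) • ((deriv qq w₀) • L1)))
      p₀ := hfst.sub hprod
  -- outer scalar function
  set t₀ := tau p₀ with ht₀
  have hlint : HasDerivAt (fun t : ℝ => 2*Real.pi*t) (2*Real.pi) t₀ := by
    simpa using (hasDerivAt_id t₀).const_mul (2*Real.pi)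
  have hinner : HasDerivAt (fun t : ℝ => (Real.cos (2*Real.pi*t) + 4/5) * (5/2))
      ((-Real.sin (2*Real.pi*t₀) * (2*Real.pi)) * (5/2)) t₀ :=
    (hlint.cos.add_const _).mul_const _
  have hSTd2 : HasDerivAt Real.smoothTransition
      (deriv Real.smoothTransition ((Real.cos (2*Real.pi*t₀) + 4/5) * (5/2)))
      ((Real.cos (2*Real.pi*t₀) + 4/5) * (5/2)) :=
    (((Real.smoothTransition.contDiff (n := (1:ℕ∞))).differentiable (by simp)) _).hasDerivAt
  have hout := hSTd2.comp t₀ hinner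
  simp only [Function.comp_def] at hout
  set m := deriv Real.smoothTransition ((Real.cos (2*Real.pi*t₀) + 4/5) * (5/2)) *
      ((-Real.sin (2*Real.pi*t₀) * (2*Real.pi)) * (5/2)) with hm
  have hchi : HasFDerivAt chi
      (m • (L1 - ((qq p₀.1) • ((1:ℝ) • (L2 - Cd • L1))
        + (gg (p₀.2 - ct p₀.1)) • ((deriv qq w₀) • L1)))) p₀ := by
    have h := hout.comp_hasFDerivAt p₀ htau
    exact h.congr_of_eventuallyEq (by filter_upwards with p; rfl)
  have hfd := hchi.fderiv
  rw [hfd]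
  have hvz2 : p₀.2 - ct p₀.1 = 0 := by simp [hp₀, hct]
  have hgz : gg (p₀.2 - ct p₀.1) = 0 := by rw [hvz2]; exact gg_zero
  have hq1 : qq p₀.1 = qq w₀ := rfl
  simp only [hgz, hq1, zero_smul, add_zero, one_smul,
    ContinuousLinearMap.smul_apply, ContinuousLinearMap.sub_apply, hL1, hL2,
    ContinuousLinearMap.coe_fst', ContinuousLinearMap.coe_snd', smul_eq_mul]
  -- now scalar arithmetic
  have hK : (Real.pi * (1 + s^2))⁻¹ = S / Real.pi := by
    rw [hS]; field_simp
  rw [hK]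
  have hqq : qq w₀ = (S/Real.pi) / (1 + (S/Real.pi)^2) := by rw [hqval, hkk]
  rw [hqq, hCd]
  field_simp
  ring


/-- There exists a `C^∞` bump function `χ : ℝ² → ℝ` with values in `[0,1]`, doubly
`1`-periodic, equal to `1` when the fractional part of `w` is in `[0,1/4] ∪ [3/4,1)`,
equal to `0` when it is in `[7/16, 9/16]`, and whose gradient at the point
`γ(s) = (arccot(s)/π, s)` is parallel to `γ̇(s) = (-1/(π(1+s²)), 1)` for `s ∈ (-1,1)`. -/
theorem stmt_6 :
    ∃ χ : ℝ × ℝ → ℝ,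
      ContDiff ℝ (⊤ : ℕ∞) χ ∧
      (∀ p : ℝ × ℝ, χ p ∈ Set.Icc (0 : ℝ) 1) ∧
      (∀ w z : ℝ, χ (w + 1, z) = χ (w, z)) ∧
      (∀ w z : ℝ, χ (w, z + 1) = χ (w, z)) ∧
      (∀ w z : ℝ, Int.fract w ∈ Set.Icc (0 : ℝ) (1 / 4) ∪ Set.Ico (3 / 4 : ℝ) 1 →
        χ (w, z) = 1) ∧
      (∀ w z : ℝ, Int.fract w ∈ Set.Icc (7 / 16 : ℝ) (9 / 16) → χ (w, z) = 0) ∧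
      (∀ s ∈ Set.Ioo (-1 : ℝ) 1,
        fderiv ℝ χ (arccot s / Real.pi, s) (1, 0) +
          (Real.pi * (1 + s ^ 2))⁻¹ * fderiv ℝ χ (arccot s / Real.pi, s) (0, 1) = 0) := by
  refine ⟨chi, contDiff_chi, chi_mem_Icc, chi_wper, chi_zper, ?_, ?_, ?_⟩
  · intro w z h
    exact chi_eq_one w z (bandA w h)
  · intro w z h
    exact chi_eq_zero w z (bandB w h)
  · intro s hs
    have h := grad_chi s hs
    simpa [arccot] using h
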